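/- For coprime integers p > 1 and q, (1/p) · Σ' ((ζ+1)/(ζ−1)) · ((ζ^q+1)/(ζ^q−1)) = −4 s(q,p), where the primed sum runs over all p-th roots of unity ζ ≠ 1 in ℂ. -/

import Mathlib

/-!
For `ζ ^ p = 1` the function `(ζ + 1) / (ζ - 1)` has the finite Fourier expansion
`2 ∑_{j<p} ((j/p)) ζ ^ j`, because `∑_{j<p} j ζ ^ j = p / (ζ - 1)` for `ζ ≠ 1`. Multiplying the
expansions at `ζ` and `ζ ^ q` and summing over all `p`-th roots of unity, the orthogonality
relation `∑_ζ ζ ^ m = p · [p ∣ m]` keeps only the pairs `j ≡ -q k (mod p)`, which leaves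
`p ∑_k ((k/p)) ((-q k/p)) = -p s(q,p)`.
-/

open scoped Classical

/-- The Dedekind symbol `((x))`. -/
noncomputable def dedekindSymbol (x : ℝ) : ℝ :=
  if ∃ n : ℤ, x = (n : ℝ) then 0 else Int.fract x - 1/2

/-- The classical Dedekind sum `s(q,p)` with integer first argument. -/
noncomputable def dedekindSum (q : ℤ) (p : ℕ) : ℝ :=
  ∑ μ ∈ Finset.range p,
    dedekindSymbol ((μ : ℝ) / (p : ℝ)) * dedekindSymbol ((q : ℝ) * (μ : ℝ) / (p : ℝ))

/-- The set of `p`-th roots of unity in `ℂ` different from `1`. -/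
noncomputable def nontrivialRootsOfUnity (p : ℕ) : Finset ℂ :=
  (Polynomial.nthRoots p (1 : ℂ)).toFinset.erase 1

open Finset Polynomial

lemma dedekindSymbol_eq_ite_fract (x : ℝ) :
    dedekindSymbol x = if Int.fract x = 0 then 0 else Int.fract x - 1 / 2 := by
  simp only [dedekindSymbol, Int.fract_eq_zero_iff, Set.mem_range, eq_comm]

lemma dedekindSymbol_add_intCast (x : ℝ) (n : ℤ) : dedekindSymbol (x + n) = dedekindSymbol x := by
  simp only [dedekindSymbol_eq_ite_fract, Int.fract_add_intCast]

lemma dedekindSymbol_neg (x : ℝ) : dedekindSymbol (-x) = -dedekindSymbol x := by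
  simp only [dedekindSymbol_eq_ite_fract, Int.fract_neg_eq_zero]
  split_ifs with h
  · simp
  · rw [Int.fract_neg h]
    ring

lemma dedekindSymbol_intCast_emod_div (m : ℤ) (p : ℕ) :
    dedekindSymbol ((m % p : ℤ) / p) = dedekindSymbol (m / p) := by
  rcases p.eq_zero_or_pos with rfl | hp
  · simp
  have hpR : (p : ℝ) ≠ 0 := by positivity
  have hm : (m : ℝ) / p = (m % p : ℤ) / p + (m / p : ℤ) := by
    rw [div_add' _ _ _ hpR, ← Int.cast_natCast p, ← Int.cast_mul, ← Int.cast_add, mul_comm,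
      Int.emod_add_mul_ediv]
  rw [hm, dedekindSymbol_add_intCast]

lemma dedekindSymbol_natCast_div_of_lt {j p : ℕ} (hjp : j < p) :
    dedekindSymbol (j / p) = j / p - 1 / 2 + if j = 0 then 1 / 2 else 0 := by
  have hp : (0 : ℝ) < p := by exact_mod_cast (j.zero_le.trans_lt hjp)
  have hfract : Int.fract ((j : ℝ) / p) = j / p :=
    Int.fract_eq_self.2 ⟨by positivity, (div_lt_one hp).2 (by exact_mod_cast hjp)⟩
  rw [dedekindSymbol_eq_ite_fract, hfract]
  split_ifs <;> simp_all [hp.ne']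

lemma sum_range_dedekindSymbol_div (p : ℕ) : ∑ j ∈ range p, dedekindSymbol (j / p) = 0 := by
  rcases p.eq_zero_or_pos with rfl | hp
  · simp
  have hgauss : (∑ j ∈ range p, (j : ℝ)) * 2 = p * (p - 1) := by
    have := congrArg (Nat.cast : ℕ → ℝ) (sum_range_id_mul_two p)
    push_cast [Nat.cast_sub hp] at this
    exact this
  rw [sum_congr rfl fun j hj => dedekindSymbol_natCast_div_of_lt (mem_range.1 hj),
    sum_add_distrib, sum_sub_distrib, sum_ite_eq', if_pos (mem_range.2 hp), ← sum_div, sum_const,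
    card_range, nsmul_eq_mul]
  field_simp
  linarith

lemma geom_sum_eq_zero_of_pow_eq_one {R : Type*} [Ring R] [NoZeroDivisors R] {ζ : R} {n : ℕ}
    (h : ζ ^ n = 1) (hζ : ζ ≠ 1) : ∑ i ∈ range n, ζ ^ i = 0 := by
  have := geom_sum_mul ζ n
  rw [h, sub_self, mul_eq_zero, sub_eq_zero] at this
  exact this.resolve_right hζ

lemma sub_one_mul_sum_range_natCast_mul_pow {R : Type*} [CommRing R] (ζ : R) (n : ℕ) :
    (ζ - 1) * ∑ i ∈ range n, (i : R) * ζ ^ i = (n - 1) * ζ ^ n - ∑ i ∈ range n, ζ ^ i + 1 := by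
  induction n with
  | zero => simp
  | succ n ih =>
    rw [sum_range_succ, sum_range_succ (fun i => ζ ^ i), mul_add, ih]
    push_cast
    ring

lemma sum_range_natCast_mul_pow_of_pow_eq_one {K : Type*} [Field K] {ζ : K} {n : ℕ}
    (h : ζ ^ n = 1) (hζ : ζ ≠ 1) : ∑ i ∈ range n, (i : K) * ζ ^ i = n / (ζ - 1) := by
  rw [eq_div_iff (sub_ne_zero.2 hζ), mul_comm, sub_one_mul_sum_range_natCast_mul_pow, h,
    geom_sum_eq_zero_of_pow_eq_one h hζ]
  ring

lemma sum_range_dedekindSymbol_div_mul_pow {p : ℕ} (hp : 0 < p) (ζ : ℂ) :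
    ∑ j ∈ range p, (dedekindSymbol (j / p) : ℂ) * ζ ^ j =
      (∑ j ∈ range p, (j : ℂ) * ζ ^ j) / p - (∑ j ∈ range p, ζ ^ j) / 2 + 1 / 2 := by
  have hterm : ∀ j ∈ range p, (dedekindSymbol (j / p) : ℂ) * ζ ^ j =
      (j : ℂ) * ζ ^ j / p - ζ ^ j / 2 + if j = 0 then 1 / 2 else 0 := by
    intro j hj
    rw [dedekindSymbol_natCast_div_of_lt (mem_range.1 hj)]
    split_ifs with h0 <;> simp [h0]
    ring
  rw [sum_congr rfl hterm, sum_add_distrib, sum_sub_distrib, sum_ite_eq', if_pos (mem_range.2 hp),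
    sum_div, sum_div]

/-- At `ζ = 1` both sides vanish: the left one because `x / 0 = 0`, the right one because
`∑ ((j/p)) = 0`. -/
lemma add_one_div_sub_one_eq_two_mul_sum_dedekindSymbol {p : ℕ} (hp : 0 < p) {ζ : ℂ}
    (h : ζ ^ p = 1) :
    (ζ + 1) / (ζ - 1) = 2 * ∑ j ∈ range p, (dedekindSymbol (j / p) : ℂ) * ζ ^ j := by
  rcases eq_or_ne ζ 1 with rfl | hζ
  · simp [← Complex.ofReal_sum, sum_range_dedekindSymbol_div]
  · have hp' : (p : ℂ) ≠ 0 := by exact_mod_cast hp.ne'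
    rw [sum_range_dedekindSymbol_div_mul_pow hp, sum_range_natCast_mul_pow_of_pow_eq_one h hζ,
      geom_sum_eq_zero_of_pow_eq_one h hζ]
    field_simp
    ring

lemma IsPrimitiveRoot.nthRoots_one_toFinset_eq_image {R : Type*} [CommRing R] [IsDomain R]
    [DecidableEq R] {ω : R} {p : ℕ} (hω : IsPrimitiveRoot ω p) :
    (nthRoots p (1 : R)).toFinset = (range p).image (ω ^ ·) := by
  rw [hω.nthRoots_eq (one_pow p), Multiset.toFinset_map, Multiset.toFinset_range]
  simp

lemma IsPrimitiveRoot.sum_nthRoots_one_zpow {K : Type*} [Field K] [DecidableEq K] {ω : K}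
    {p : ℕ} (hω : IsPrimitiveRoot ω p) (m : ℤ) :
    ∑ ζ ∈ (nthRoots p (1 : K)).toFinset, ζ ^ m = if (p : ℤ) ∣ m then (p : K) else 0 := by
  rw [hω.nthRoots_one_toFinset_eq_image, sum_image fun i hi j hj h =>
    hω.pow_inj (mem_range.1 hi) (mem_range.1 hj) h]
  have hcomm : ∀ i : ℕ, (ω ^ i) ^ m = (ω ^ m) ^ i := fun i => by
    rw [← zpow_natCast, ← zpow_natCast, ← zpow_mul, ← zpow_mul, mul_comm]
  simp only [hcomm]
  split_ifs with hdvd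
  · simp [(hω.zpow_eq_one_iff_dvd m).2 hdvd]
  · refine geom_sum_eq_zero_of_pow_eq_one ?_ (mt (hω.zpow_eq_one_iff_dvd m).1 hdvd)
    rw [← zpow_natCast, ← zpow_mul, mul_comm, zpow_mul, zpow_natCast, hω.pow_eq_one, one_zpow]

lemma sum_range_ite_intCast_dvd_add {M : Type*} [AddCommMonoid M] {p : ℕ} (hp : 0 < p)
    (f : ℕ → M) (m : ℤ) :
    ∑ j ∈ range p, (if (p : ℤ) ∣ j + m then f j else 0) = f ((-m) % p).toNat := by
  have hpZ : (0 : ℤ) < p := by exact_mod_cast hp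
  have hmod : 0 ≤ (-m) % p := Int.emod_nonneg _ hpZ.ne'
  have hiff : ∀ j ∈ range p, (p : ℤ) ∣ j + m ↔ ((-m) % p).toNat = j := by
    intro j hj
    rw [← Int.ofNat_inj, Int.toNat_of_nonneg hmod, ← sub_neg_eq_add, ← Int.modEq_iff_dvd,
      Int.ModEq, Int.emod_eq_of_lt (a := j) (by positivity) (by exact_mod_cast mem_range.1 hj)]
  rw [sum_congr rfl fun j hj => if_congr (hiff j hj) rfl rfl, sum_ite_eq, if_pos]
  rw [mem_range, ← Int.ofNat_lt, Int.toNat_of_nonneg hmod]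
  exact Int.emod_lt_of_pos _ hpZ

lemma sum_range_ite_dvd_add_dedekindSymbol {p : ℕ} (hp : 0 < p) (m : ℤ) :
    ∑ j ∈ range p, (if (p : ℤ) ∣ j + m then dedekindSymbol (j / p) else 0) =
      -dedekindSymbol (m / p) := by
  have hcast : (((-m) % p).toNat : ℝ) = ((-m % p : ℤ) : ℝ) := by
    exact_mod_cast Int.toNat_of_nonneg (Int.emod_nonneg _ (by exact_mod_cast hp.ne'))
  rw [sum_range_ite_intCast_dvd_add hp (fun j => dedekindSymbol (j / p)), hcast,
    dedekindSymbol_intCast_emod_div, Int.cast_neg, neg_div, dedekindSymbol_neg]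

lemma add_one_div_sub_one_mul_zpow_eq_sum {p : ℕ} (hp : 0 < p) {ζ : ℂ} (h : ζ ^ p = 1) (q : ℤ) :
    ((ζ + 1) / (ζ - 1)) * ((ζ ^ q + 1) / (ζ ^ q - 1)) =
      4 * ∑ j ∈ range p, ∑ k ∈ range p,
        ((dedekindSymbol (j / p) * dedekindSymbol (k / p) : ℝ) : ℂ) * ζ ^ ((j : ℤ) + q * k) := by
  have hζ : ζ ≠ 0 := by rintro rfl; simp [hp.ne'] at h
  have hq : (ζ ^ q) ^ p = 1 := by
    rw [← zpow_natCast, ← zpow_mul, mul_comm, zpow_mul, zpow_natCast, h, one_zpow]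
  rw [add_one_div_sub_one_eq_two_mul_sum_dedekindSymbol hp h,
    add_one_div_sub_one_eq_two_mul_sum_dedekindSymbol hp hq, mul_mul_mul_comm, sum_mul_sum,
    show (2 : ℂ) * 2 = 4 by norm_num]
  congr 1
  refine sum_congr rfl fun j _ => sum_congr rfl fun k _ => ?_
  rw [zpow_add₀ hζ, zpow_mul, zpow_natCast, zpow_natCast]
  push_cast
  ring

lemma sum_nthRoots_one_sum_dedekindSymbol_mul_zpow {p : ℕ} (hp : 0 < p) (q : ℤ) :
    ∑ ζ ∈ (nthRoots p (1 : ℂ)).toFinset, ∑ j ∈ range p, ∑ k ∈ range p,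
        ((dedekindSymbol (j / p) * dedekindSymbol (k / p) : ℝ) : ℂ) * ζ ^ ((j : ℤ) + q * k) =
      ((-(p * dedekindSum q p) : ℝ) : ℂ) := by
  have hω := Complex.isPrimitiveRoot_exp p hp.ne'
  have horth : ∀ j k : ℕ, ∑ ζ ∈ (nthRoots p (1 : ℂ)).toFinset,
      ((dedekindSymbol (j / p) * dedekindSymbol (k / p) : ℝ) : ℂ) * ζ ^ ((j : ℤ) + q * k) =
        ((dedekindSymbol (k / p) * p *
          if (p : ℤ) ∣ j + q * k then dedekindSymbol (j / p) else 0 : ℝ) : ℂ) := by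
    intro j k
    rw [← mul_sum, hω.sum_nthRoots_one_zpow]
    split_ifs <;> push_cast <;> ring
  calc _ = ∑ j ∈ range p, ∑ k ∈ range p, ((dedekindSymbol (k / p) * p *
          if (p : ℤ) ∣ j + q * k then dedekindSymbol (j / p) else 0 : ℝ) : ℂ) := by
        rw [sum_comm]
        refine sum_congr rfl fun j _ => ?_
        rw [sum_comm]
        exact sum_congr rfl fun k _ => horth j k
    _ = _ := by
        rw [sum_comm]
        simp only [← Complex.ofReal_sum, ← mul_sum, sum_range_ite_dvd_add_dedekindSymbol hp]
        congr 1
        simp only [dedekindSum, mul_sum, ← sum_neg_distrib]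
        refine sum_congr rfl fun k _ => ?_
        push_cast
        ring

theorem cotangent_dedekind_sum_general (p : ℕ) (q : ℤ) (hp : 1 < p) :
    (1 / (p : ℂ)) * ∑ ζ ∈ nontrivialRootsOfUnity p,
        ((ζ + 1) / (ζ - 1)) * ((ζ ^ q + 1) / (ζ ^ q - 1)) =
      ((-4 * dedekindSum q p : ℝ) : ℂ) := by
  have hp₀ : 0 < p := by omega
  rw [nontrivialRootsOfUnity, sum_erase _ (a := 1)
      (f := fun ζ : ℂ => ((ζ + 1) / (ζ - 1)) * ((ζ ^ q + 1) / (ζ ^ q - 1))) (by simp),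
    sum_congr rfl fun ζ hζ => add_one_div_sub_one_mul_zpow_eq_sum hp₀
      ((mem_nthRoots hp₀).1 (Multiset.mem_toFinset.1 hζ)) q,
    ← mul_sum, sum_nthRoots_one_sum_dedekindSymbol_mul_zpow hp₀]
  have hp' : (p : ℂ) ≠ 0 := by exact_mod_cast hp₀.ne'
  push_cast
  field_simp

theorem cotangent_dedekind_sum (p : ℕ) (q : ℤ) (hp : 1 < p) (hcop : Int.gcd q (p : ℤ) = 1) :
    (1 / (p : ℂ)) * ∑ ζ ∈ nontrivialRootsOfUnity p,
        ((ζ + 1) / (ζ - 1)) * ((ζ ^ q + 1) / (ζ ^ q - 1)) =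
      ((-4 * dedekindSum q p : ℝ) : ℂ) :=
  cotangent_dedekind_sum_general p q hp
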